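/- arXiv:2510.17029 — 2 statements merged into one kernel-verified Lean document; each statement's English description precedes it below -/
import Mathlib

section
/- Let n ≥ 3 be an integer. Every point of ℝ² lies on at most three of the lines L_0, …, L_{n−1} of the Böröczky configuration; i.e. the configuration has no points of multiplicity four or higher. -/
open Complex

/-- `P n j = exp(2πij/n)`. -/
noncomputable def Ppt (n j : ℕ) : ℂ := Complex.exp (2 * Real.pi * Complex.I * j / n)

/-- `Q n j = -exp(-4πij/n)`. -/
noncomputable def Qpt (n j : ℕ) : ℂ := -Complex.exp (-(4 * Real.pi * Complex.I * j) / n)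

open scoped Classical in
/-- The `j`-th line of the Böröczky configuration: the line through `P n j` and
`Q n j` if they are distinct, and the tangent line to the unit circle at `P n j`
otherwise (identifying ℝ² with ℂ). -/
noncomputable def Bline (n j : ℕ) : Set ℂ :=
  if Ppt n j = Qpt n j then
    {z : ℂ | (z * (starRingEnd ℂ) (Ppt n j)).re = 1}
  else
    {z : ℂ | ((z - Ppt n j) * (starRingEnd ℂ) (Qpt n j - Ppt n j)).im = 0}

/-- The set of triple points of the Böröczky configuration: points lying on at
least three of the lines `L_0, …, L_{n-1}`. -/
def TriplePts (n : ℕ) : Set ℂ :=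
  {z : ℂ | 3 ≤ ({j : ℕ | j < n ∧ z ∈ Bline n j} : Set ℕ).ncard}

lemma conj_arg (n j : ℕ) :
    (starRingEnd ℂ) (2 * Real.pi * Complex.I * j / n) = -(2 * Real.pi * Complex.I * j / n) := by
  simp only [map_div₀, map_mul, Complex.conj_I, Complex.conj_ofReal, map_ofNat,
    Complex.conj_natCast]
  ring

lemma ppt_mul_conj (n j : ℕ) : Ppt n j * (starRingEnd ℂ) (Ppt n j) = 1 := by
  unfold Ppt
  rw [← Complex.exp_conj, conj_arg, ← Complex.exp_add, add_neg_cancel, Complex.exp_zero]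

lemma qpt_eq (n j : ℕ) : Qpt n j = -((starRingEnd ℂ) (Ppt n j))^2 := by
  unfold Qpt Ppt
  rw [← Complex.exp_conj, conj_arg, sq, ← Complex.exp_add]
  congr 1
  ring

lemma mem_bline_iff (n j : ℕ) (z : ℂ) :
    z ∈ Bline n j ↔
      (Ppt n j)^3 - z * (Ppt n j)^2 + (starRingEnd ℂ) z * Ppt n j - 1 = 0 := by
  set ζ := Ppt n j with hζdef
  set c := (starRingEnd ℂ) ζ with hcdef
  have h1 : ζ * c = 1 := ppt_mul_conj n j
  have hQ : Qpt n j = -c^2 := qpt_eq n j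
  unfold Bline
  split_ifs with hPQ
  · -- tangent case
    have hPQ' : ζ = -c^2 := by rw [← hQ]; exact hPQ
    have h3 : ζ^3 = -1 := by linear_combination ζ^2 * hPQ' - (ζ*c + 1) * h1
    have h2 : ζ^2 = -c := by linear_combination c * h3 - ζ^2 * h1
    have hre : (z * c).re = 1 ↔ z * c + (starRingEnd ℂ) z * ζ = 2 := by
      have hc' : (starRingEnd ℂ) z * ζ = (starRingEnd ℂ) (z * c) := by
        rw [map_mul, hcdef, Complex.conj_conj]
      rw [hc', Complex.add_conj]
      constructor
      · intro h; rw [h]; norm_num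
      · intro h
        have h' : 2 * (z * c).re = 2 := by exact_mod_cast h
        linarith
    rw [Set.mem_setOf_eq, hre]
    constructor
    · intro h; linear_combination h3 - z * h2 + h
    · intro h; linear_combination h - h3 + z * h2
  · -- generic case
    have hPQ' : ζ ≠ -c^2 := by rw [← hQ]; exact hPQ
    have hc3 : (1 : ℂ) + c^3 ≠ 0 := by
      intro h
      apply hPQ'
      linear_combination ζ * h - c^2 * h1
    have hconj : (starRingEnd ℂ) (Qpt n j - ζ) = -ζ^2 - c := by
      rw [hQ, map_sub, map_neg, map_pow, hcdef, Complex.conj_conj]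
    rw [Set.mem_setOf_eq, hconj, ← Complex.conj_eq_iff_im]
    have hcw : (starRingEnd ℂ) ((z - ζ) * (-ζ^2 - c)) =
        ((starRingEnd ℂ) z - c) * (-c^2 - ζ) := by
      rw [map_mul, map_sub, map_sub, map_neg, map_pow, hcdef, Complex.conj_conj]
    rw [hcw]
    have key : ((starRingEnd ℂ) z - c) * (-c^2 - ζ) - (z - ζ) * (-ζ^2 - c) =
        -((ζ^3 - z*ζ^2 + (starRingEnd ℂ) z * ζ - 1) * (1 + c^3)) := by
      linear_combination ((ζ^2*c^2 + ζ*c + 1) - z*c*(ζ*c+1) + (starRingEnd ℂ) z * c^2) * h1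
    constructor
    · intro h
      have h0 : (ζ^3 - z*ζ^2 + (starRingEnd ℂ) z * ζ - 1) * (1 + c^3) = 0 := by
        linear_combination key - h
      exact (mul_eq_zero.mp h0).resolve_right hc3
    · intro hA
      linear_combination key - (1 + c^3) * hA

/-- Every point of the plane lies on at most three of the lines
`L_0, …, L_{n-1}` of the Böröczky configuration. -/
theorem boroczky_no_quadruple_points (n : ℕ) (hn : 3 ≤ n) (z : ℂ) :
    ({j : ℕ | j < n ∧ z ∈ Bline n j} : Set ℕ).ncard ≤ 3 := by
  classical
  set S := ({j : ℕ | j < n ∧ z ∈ Bline n j} : Set ℕ) with hS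
  set p : Polynomial ℂ :=
    Polynomial.X^3 - Polynomial.C z * Polynomial.X^2 +
      Polynomial.C ((starRingEnd ℂ) z) * Polynomial.X - 1 with hp
  have hdeg : p.natDegree = 3 := by
    rw [hp]; compute_degree!
  have hp0 : p ≠ 0 := by
    intro h
    rw [h, Polynomial.natDegree_zero] at hdeg
    exact (by norm_num : (0:ℕ) ≠ 3) hdeg
  have hroot : ∀ j ∈ S, p.IsRoot (Ppt n j) := by
    intro j hj
    have h := (mem_bline_iff n j z).mp hj.2
    simp only [hp, Polynomial.IsRoot, Polynomial.eval_sub, Polynomial.eval_add,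
      Polynomial.eval_mul, Polynomial.eval_pow, Polynomial.eval_X, Polynomial.eval_C,
      Polynomial.eval_one]
    linear_combination h
  have hinj : Set.InjOn (Ppt n) S := by
    have hn0 : n ≠ 0 := by omega
    have hprim := Complex.isPrimitiveRoot_exp n hn0
    intro a ha b hb hab
    have hP : ∀ m : ℕ, Ppt n m = Complex.exp (2 * Real.pi * Complex.I / n) ^ m := by
      intro m
      unfold Ppt
      rw [← Complex.exp_nat_mul]
      congr 1
      ring
    rw [hP a, hP b] at hab
    exact hprim.pow_inj ha.1 hb.1 hab
  calc S.ncard = (Ppt n '' S).ncard := (Set.ncard_image_of_injOn hinj).symm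
    _ ≤ (↑p.roots.toFinset : Set ℂ).ncard := by
        apply Set.ncard_le_ncard _ (p.roots.toFinset : Set ℂ).toFinite
        rintro w ⟨j, hj, rfl⟩
        simp only [Finset.coe_sort_coe, Finset.mem_coe, Multiset.mem_toFinset]
        rw [Polynomial.mem_roots hp0]
        exact hroot j hj
    _ = p.roots.toFinset.card := by rw [Set.ncard_coe_finset]
    _ ≤ Multiset.card p.roots := p.roots.toFinset_card_le
    _ ≤ p.natDegree := p.card_roots'
    _ = 3 := hdeg
end

section
/- Let n ≥ 3 be an integer divisible by 3. The rotation ρ : ℂ → ℂ, ρ(z) = e^{2πi/3}·z, maps the line L_j onto the line L_{(j + n/3) mod n} for every 0 ≤ j ≤ n−1, and complex conjugation z ↦ conj(z) maps L_j onto L_{(n−j) mod n}. Consequently every element of G maps the set of lines {L_0, …, L_{n−1}} onto itself and maps the set ℬ_n of triple points bijectively onto itself, so G acts on ℬ_n. -/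
/-! Since `Q_j = -(conj P_j)²`, the line `L_j` depends on `P_j = ζ^j` (`ζ = e^{2πi/n}`) alone,
through a rule that commutes with multiplication by a cube root of unity and with conjugation.
As `e^{2πi/3} = ζ^{n/3}` and `conj ζ^j = ζ^{n-j}`, the generators of `G` act on the indices as
`j ↦ j + n/3` and `j ↦ -j` modulo `n`. A symmetry that permutes the indices of the lines preserves
the number of lines through each point, hence the set of triple points. -/

open Complex

noncomputable def rotPerm : Equiv.Perm ℂ :=
  Equiv.mulLeft₀ (Complex.exp (2 * Real.pi * Complex.I / 3)) (Complex.exp_ne_zero _)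

noncomputable def conjPerm : Equiv.Perm ℂ :=
  ⟨fun z => (starRingEnd ℂ) z, fun z => (starRingEnd ℂ) z,
    fun z => by simp, fun z => by simp⟩

noncomputable def dihedralG : Subgroup (Equiv.Perm ℂ) :=
  Subgroup.closure {rotPerm, conjPerm}

def Gorbit (v : ℂ) : Set ℂ := {z : ℂ | ∃ g ∈ dihedralG, g v = z}

open ComplexConjugate

def tangentLine (p : ℂ) : Set ℂ := {z | (z * conj p).re = 1}

def chordLine (a b : ℂ) : Set ℂ := {z | ((z - a) * conj (b - a)).im = 0}

section LineImages

variable {ω : ℂ}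

lemma image_mul_tangentLine (hω : ‖ω‖ = 1) (p : ℂ) :
    (ω * ·) '' tangentLine p = tangentLine (ω * p) := by
  have hω0 : ω ≠ 0 := norm_ne_zero_iff.mp (hω ▸ one_ne_zero)
  rw [Set.image_eq_preimage_of_inverse (inv_mul_cancel_left₀ hω0) (mul_inv_cancel_left₀ hω0)]
  ext z
  simp only [tangentLine, Set.mem_preimage, Set.mem_ofPred_eq, map_mul, ← Complex.inv_eq_conj hω]
  ring_nf

lemma image_mul_chordLine (hω : ω ≠ 0) (a b : ℂ) :
    (ω * ·) '' chordLine a b = chordLine (ω * a) (ω * b) := by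
  rw [Set.image_eq_preimage_of_inverse (inv_mul_cancel_left₀ hω) (mul_inv_cancel_left₀ hω)]
  ext z
  have key : (z - ω * a) * conj (ω * b - ω * a)
      = (Complex.normSq ω : ℂ) * ((ω⁻¹ * z - a) * conj (b - a)) := by
    rw [← Complex.mul_conj, ← mul_sub, map_mul]
    field_simp
  simp only [chordLine, Set.mem_preimage, Set.mem_ofPred_eq, key, Complex.im_ofReal_mul,
    mul_eq_zero, Complex.normSq_eq_zero, hω, false_or]

end LineImages

lemma image_conj_tangentLine (p : ℂ) : conj '' tangentLine p = tangentLine (conj p) := by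
  rw [Function.Involutive.image_eq_preimage_symm Complex.conj_conj]
  ext z
  have key : conj z * conj p = conj (z * p) := (map_mul _ _ _).symm
  simp only [tangentLine, Set.mem_preimage, Set.mem_ofPred_eq, key, Complex.conj_re,
    Complex.conj_conj]

lemma image_conj_chordLine (a b : ℂ) :
    conj '' chordLine a b = chordLine (conj a) (conj b) := by
  rw [Function.Involutive.image_eq_preimage_symm Complex.conj_conj]
  ext z
  have key : (conj z - a) * conj (b - a) = conj ((z - conj a) * conj (conj b - conj a)) := by
    simp
  simp only [chordLine, Set.mem_preimage, Set.mem_ofPred_eq, key, Complex.conj_im, neg_eq_zero]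

/-- The line `L_j` as a function of `p = P_j` alone, using `Q_j = -(conj P_j)²`. -/
noncomputable def boroczkyLine (p : ℂ) : Set ℂ :=
  if p = -conj p ^ 2 then tangentLine p else chordLine p (-conj p ^ 2)

lemma image_mul_boroczkyLine {ω : ℂ} (hω : ω ^ 3 = 1) (p : ℂ) :
    (ω * ·) '' boroczkyLine p = boroczkyLine (ω * p) := by
  have hnorm : ‖ω‖ = 1 := Complex.norm_eq_one_of_pow_eq_one hω three_ne_zero
  have hω0 : ω ≠ 0 := by rintro rfl; norm_num at hω
  have hQ : -conj (ω * p) ^ 2 = ω * -conj p ^ 2 := by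
    have : conj ω ^ 2 = ω := by
      rw [← Complex.inv_eq_conj hnorm, inv_pow, inv_eq_iff_eq_inv, ← mul_eq_one_iff_eq_inv₀ hω0,
        ← pow_succ, hω]
    rw [map_mul, mul_pow, this]
    ring
  unfold boroczkyLine
  simp only [hQ, mul_right_inj' hω0]
  split_ifs
  · exact image_mul_tangentLine hnorm p
  · exact image_mul_chordLine hω0 p _

lemma image_conj_boroczkyLine (p : ℂ) :
    conj '' boroczkyLine p = boroczkyLine (conj p) := by
  have hQ : -conj (conj p) ^ 2 = conj (-conj p ^ 2) := by simp
  unfold boroczkyLine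
  simp only [hQ, (RingHom.injective _).eq_iff]
  split_ifs
  · exact image_conj_tangentLine p
  · exact image_conj_chordLine p _

section Vertices

open scoped Real

variable {n : ℕ}

lemma Ppt_eq_pow (n j : ℕ) : Ppt n j = exp (2 * π * I / n) ^ j := by
  rw [Ppt, ← exp_nat_mul]
  ring_nf

lemma exp_two_pi_I_div_pow_self (n : ℕ) : exp (2 * π * I / n) ^ n = 1 := by
  rcases eq_or_ne n 0 with rfl | hn
  · exact pow_zero _
  · exact (isPrimitiveRoot_exp n hn).pow_eq_one

lemma exp_two_pi_I_div_three_pow_three : exp (2 * π * I / 3) ^ 3 = 1 := by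
  exact_mod_cast exp_two_pi_I_div_pow_self 3

lemma Ppt_mod (n j : ℕ) : Ppt n (j % n) = Ppt n j := by
  rw [Ppt_eq_pow, Ppt_eq_pow, ← pow_eq_pow_mod j (exp_two_pi_I_div_pow_self n)]

lemma conj_Ppt {j : ℕ} (hj : j ≤ n) : conj (Ppt n j) = Ppt n (n - j) := by
  have hconj : conj (exp (2 * π * I / n)) = (exp (2 * π * I / n))⁻¹ := by
    rw [← exp_conj, ← exp_neg]
    congr 1
    simp only [map_div₀, map_mul, map_ofNat, conj_ofReal, conj_I, mul_neg, map_natCast]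
    ring
  rw [Ppt_eq_pow, Ppt_eq_pow, map_pow, hconj, pow_sub₀ _ (exp_ne_zero _) hj,
    exp_two_pi_I_div_pow_self, one_mul, inv_pow]

lemma Ppt_add_div_three (hdvd : 3 ∣ n) (hn : n ≠ 0) (j : ℕ) :
    Ppt n (j + n / 3) = exp (2 * π * I / 3) * Ppt n j := by
  rw [Ppt_eq_pow, Ppt_eq_pow, pow_add, mul_comm, ← exp_nat_mul, Nat.cast_div hdvd (by norm_num)]
  congr 2
  field_simp
  norm_num

lemma Qpt_eq_neg_conj_sq (n j : ℕ) : Qpt n j = -conj (Ppt n j) ^ 2 := by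
  rw [Qpt, Ppt, ← exp_conj, ← exp_nat_mul]
  congr 2
  simp only [map_div₀, map_mul, map_ofNat, conj_ofReal, conj_I, mul_neg, map_natCast, neg_mul]
  ring

end Vertices

lemma Bline_eq_boroczkyLine (n j : ℕ) : Bline n j = boroczkyLine (Ppt n j) := by
  unfold Bline boroczkyLine
  rw [Qpt_eq_neg_conj_sq]
  congr 1

lemma image_rot_Bline {n : ℕ} (hdvd : 3 ∣ n) (hn : n ≠ 0) (j : ℕ) :
    (exp (2 * Real.pi * I / 3) * ·) '' Bline n j = Bline n ((j + n / 3) % n) := by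
  rw [Bline_eq_boroczkyLine, Bline_eq_boroczkyLine, Ppt_mod, Ppt_add_div_three hdvd hn]
  exact image_mul_boroczkyLine exp_two_pi_I_div_three_pow_three _

lemma image_conj_Bline {n j : ℕ} (hj : j ≤ n) : conj '' Bline n j = Bline n ((n - j) % n) := by
  rw [Bline_eq_boroczkyLine, Bline_eq_boroczkyLine, Ppt_mod, ← conj_Ppt hj]
  exact image_conj_boroczkyLine _

section FamilyStabilizer

variable {α ι : Type*}

/-- Permuting indices rather than members keeps track of coinciding members, which matters
when counting the members through a point. -/
def familyStabilizer (L : ι → Set α) : Subgroup (Equiv.Perm α) where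
  carrier := {g | ∃ σ : Equiv.Perm ι, ∀ i, g '' L i = L (σ i)}
  one_mem' := ⟨1, fun i => by simp⟩
  mul_mem' := by
    rintro g h ⟨σ, hσ⟩ ⟨τ, hτ⟩
    exact ⟨σ * τ, fun i => by rw [Equiv.Perm.coe_mul, Set.image_comp, hτ, hσ]; rfl⟩
  inv_mem' := by
    rintro g ⟨σ, hσ⟩
    refine ⟨σ⁻¹, fun i => ?_⟩
    rw [Equiv.Perm.inv_def, Equiv.Perm.inv_def]
    conv_lhs => rw [← σ.apply_symm_apply i, ← hσ]
    exact g.symm_image_image _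

variable {L : ι → Set α} {g : Equiv.Perm α}

lemma ncard_setOf_apply_mem (hg : g ∈ familyStabilizer L) (x : α) :
    {i | g x ∈ L i}.ncard = {i | x ∈ L i}.ncard := by
  obtain ⟨σ, hσ⟩ := hg
  have : {i | g x ∈ L i} = σ '' {i | x ∈ L i} := by
    rw [Equiv.image_eq_preimage_symm]
    ext i
    rw [Set.mem_preimage, Set.mem_ofPred_eq, Set.mem_ofPred_eq,
      ← g.injective.mem_set_image (a := x), hσ, σ.apply_symm_apply]
  rw [this, Set.ncard_image_of_injective _ σ.injective]

lemma image_setOf_ncard (hg : g ∈ familyStabilizer L) (p : ℕ → Prop) :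
    g '' {x | p {i | x ∈ L i}.ncard} = {x | p {i | x ∈ L i}.ncard} := by
  rw [Equiv.image_eq_preimage_symm, ← Equiv.Perm.inv_def]
  ext x
  rw [Set.mem_preimage, Set.mem_ofPred_eq, Set.mem_ofPred_eq,
    ncard_setOf_apply_mem (inv_mem hg)]

end FamilyStabilizer

lemma TriplePts_eq_setOf_ncard (n : ℕ) :
    TriplePts n = {z | 3 ≤ {j : Fin n | z ∈ Bline n j}.ncard} := by
  ext z
  have : {j : ℕ | j < n ∧ z ∈ Bline n j} = Fin.val '' {j : Fin n | z ∈ Bline n j} := by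
    ext j
    simp [Fin.exists_iff, and_comm]
  rw [TriplePts, Set.mem_ofPred_eq, Set.mem_ofPred_eq, this,
    Set.ncard_image_of_injective _ Fin.val_injective]

lemma rotPerm_mem_familyStabilizer {n : ℕ} [NeZero n] (hdvd : 3 ∣ n) :
    rotPerm ∈ familyStabilizer (fun j : Fin n => Bline n j) := by
  refine ⟨Equiv.addRight (Fin.ofNat n (n / 3)), fun j => ?_⟩
  change _ '' _ = Bline n ((j + Fin.ofNat n (n / 3) : Fin n) : ℕ)
  rw [Fin.val_add, Fin.val_ofNat, Nat.add_mod_mod]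
  exact image_rot_Bline hdvd (NeZero.ne n) j

lemma conjPerm_mem_familyStabilizer (n : ℕ) :
    conjPerm ∈ familyStabilizer (fun j : Fin n => Bline n j) := by
  refine ⟨Equiv.neg _, fun j => ?_⟩
  change _ '' _ = Bline n ((-j : Fin n) : ℕ)
  rw [Fin.val_neg']
  exact image_conj_Bline j.isLt.le

lemma dihedralG_le_familyStabilizer {n : ℕ} [NeZero n] (hdvd : 3 ∣ n) :
    dihedralG ≤ familyStabilizer (fun j : Fin n => Bline n j) := by
  rw [dihedralG, Subgroup.closure_le, Set.insert_subset_iff, Set.singleton_subset_iff]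
  exact ⟨rotPerm_mem_familyStabilizer hdvd, conjPerm_mem_familyStabilizer n⟩

/-- For `3 ∣ n`, the rotation by `2π/3` maps `L_j` onto `L_{(j + n/3) % n}`,
complex conjugation maps `L_j` onto `L_{(n - j) % n}`, and consequently every
element of the dihedral group `G` permutes the configuration lines and maps the
set of triple points bijectively onto itself. -/
theorem boroczky_dihedral_action (n : ℕ) (hn : 3 ≤ n) (hdvd : 3 ∣ n) :
    (∀ j, j < n →
      (fun z : ℂ => Complex.exp (2 * Real.pi * Complex.I / 3) * z) '' Bline n j =
        Bline n ((j + n / 3) % n)) ∧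
    (∀ j, j < n →
      (fun z : ℂ => (starRingEnd ℂ) z) '' Bline n j = Bline n ((n - j) % n)) ∧
    (∀ g ∈ dihedralG,
      (∀ j, j < n → ∃ k, k < n ∧ ⇑g '' Bline n j = Bline n k) ∧
      ⇑g '' TriplePts n = TriplePts n) := by
  have : NeZero n := NeZero.of_pos (by omega)
  refine ⟨fun j _ => image_rot_Bline hdvd (NeZero.ne n) j, fun j hj => image_conj_Bline hj.le,
    fun g hg => ⟨fun j hj => ?_, ?_⟩⟩
  · obtain ⟨σ, hσ⟩ := dihedralG_le_familyStabilizer hdvd hg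
    exact ⟨σ ⟨j, hj⟩, (σ ⟨j, hj⟩).isLt, hσ ⟨j, hj⟩⟩
  · rw [TriplePts_eq_setOf_ncard]
    exact image_setOf_ncard (dihedralG_le_familyStabilizer hdvd hg) _
end
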